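/- Let α, β, γ, γ' be real numbers with γ and γ' not nonpositive integers. For all real u, v with √|u| + √|v| < 1, the doubly indexed family a_{m,n} = (α)_{m+n} (β)_{m+n} u^m v^n / ((γ)_m (γ')_n m! n!), (m,n) ∈ ℕ², is absolutely summable; i.e., the double series defining the Appell function F₄(α,β;γ,γ';u,v) converges absolutely in the domain √|u| + √|v| < 1. -/

import Mathlib

open scoped BigOperators

/-- Pochhammer symbol `(a)_n = a (a+1) ⋯ (a+n-1)`. -/
noncomputable def poch (a : ℝ) (n : ℕ) : ℝ := ∏ i ∈ Finset.range n, (a + i)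

/- auxiliary nat inequality -/
lemma aux_nat_ineq (K N : ℕ) : (K + N) * (N + 1) ^ K ≤ (N + 2) ^ K * (N + 1) := by
  induction K with
  | zero => simp
  | succ K ih =>
    have h1 : (N + 1) ^ K ≤ (N + 2) ^ K := Nat.pow_le_pow_left (by omega) K
    calc (K + 1 + N) * (N + 1) ^ (K + 1)
        = ((K + N) * (N + 1) ^ K + (N + 1) ^ K) * (N + 1) := by ring
      _ ≤ ((N + 2) ^ K * (N + 1) + (N + 2) ^ K) * (N + 1) := by
          exact Nat.mul_le_mul_right _ (Nat.add_le_add ih h1)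
      _ = (N + 2) ^ (K + 1) * (N + 1) := by ring

/- product upper bound: ∏_{i<N} (K+i) ≤ (N+1)^K · N! -/
lemma aux_prod_upper (K N : ℕ) :
    (∏ i ∈ Finset.range N, (K + i)) ≤ (N + 1) ^ K * N.factorial := by
  induction N with
  | zero => simp
  | succ N ih =>
    rw [Finset.prod_range_succ]
    calc (∏ i ∈ Finset.range N, (K + i)) * (K + N)
        ≤ (N + 1) ^ K * N.factorial * (K + N) := Nat.mul_le_mul_right _ ih
      _ = (K + N) * (N + 1) ^ K * N.factorial := by ring
      _ ≤ (N + 2) ^ K * (N + 1) * N.factorial :=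
          Nat.mul_le_mul_right _ (aux_nat_ineq K N)
      _ = (N + 2) ^ K * (N + 1).factorial := by
          rw [Nat.factorial_succ]; ring

/- factorial bound: (G+d)! ≤ d! · (G+d+1)^G -/
lemma aux_fact_le (G d : ℕ) : (G + d).factorial ≤ d.factorial * (G + d + 1) ^ G := by
  induction G with
  | zero => simp
  | succ G ih =>
    have h1 : (G + d + 1) ^ G ≤ (G + d + 2) ^ G := Nat.pow_le_pow_left (by omega) G
    calc (G + 1 + d).factorial = (G + d + 1) * (G + d).factorial := by
          rw [show G + 1 + d = (G + d) + 1 by omega, Nat.factorial_succ]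
      _ ≤ (G + d + 1) * (d.factorial * (G + d + 1) ^ G) := Nat.mul_le_mul_left _ ih
      _ ≤ (G + d + 2) * (d.factorial * (G + d + 2) ^ G) := by
          exact Nat.mul_le_mul (by omega) (Nat.mul_le_mul_left _ h1)
      _ = d.factorial * (G + 1 + d + 1) ^ (G + 1) := by
          rw [show G + 1 + d + 1 = G + d + 2 by omega]; ring

lemma poch_upper (a : ℝ) : ∃ K : ℕ, ∀ N : ℕ,
    |poch a N| ≤ ((N : ℝ) + 1) ^ K * N.factorial := by
  refine ⟨⌈|a|⌉₊, fun N => ?_⟩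
  have h1 : |poch a N| ≤ ∏ i ∈ Finset.range N, ((⌈|a|⌉₊ : ℝ) + i) := by
    rw [poch, Finset.abs_prod]
    refine Finset.prod_le_prod (fun i _ => abs_nonneg _) (fun i _ => ?_)
    calc |a + (i : ℝ)| ≤ |a| + i := by
          have := abs_add_le a (i : ℝ)
          simpa [abs_of_nonneg (Nat.cast_nonneg i : (0:ℝ) ≤ i)] using this
      _ ≤ (⌈|a|⌉₊ : ℝ) + i := by
          have := Nat.le_ceil |a|
          linarith
  refine h1.trans ?_
  have h2 : (∏ i ∈ Finset.range N, ((⌈|a|⌉₊ : ℝ) + i))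
      = ((∏ i ∈ Finset.range N, (⌈|a|⌉₊ + i) : ℕ) : ℝ) := by
    push_cast; rfl
  rw [h2]
  have h3 := aux_prod_upper ⌈|a|⌉₊ N
  calc ((∏ i ∈ Finset.range N, (⌈|a|⌉₊ + i) : ℕ) : ℝ)
      ≤ (((N + 1) ^ ⌈|a|⌉₊ * N.factorial : ℕ) : ℝ) := by exact_mod_cast h3
    _ = ((N : ℝ) + 1) ^ ⌈|a|⌉₊ * N.factorial := by push_cast; ring

lemma poch_ne_zero {γ : ℝ} (hγ : ∀ n : ℕ, γ ≠ -(n : ℝ)) (m : ℕ) : poch γ m ≠ 0 := by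
  rw [poch]
  refine Finset.prod_ne_zero_iff.mpr (fun i _ => ?_)
  intro h
  exact hγ i (by linarith)

lemma aux_min_pos (f : ℕ → ℝ) (hf : ∀ m, 0 < f m) (G : ℕ) :
    ∃ c : ℝ, 0 < c ∧ ∀ m < G, c ≤ f m := by
  induction G with
  | zero => exact ⟨1, one_pos, fun m hm => absurd hm (Nat.not_lt_zero m)⟩
  | succ G ih =>
    obtain ⟨c, hc, hcle⟩ := ih
    refine ⟨min c (f G), lt_min hc (hf G), fun m hm => ?_⟩
    rcases Nat.lt_succ_iff_lt_or_eq.mp hm with h | h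
    · exact (min_le_left _ _).trans (hcle m h)
    · subst h; exact min_le_right _ _

lemma aux_cast_factorial (d : ℕ) :
    ((d.factorial : ℕ) : ℝ) = ∏ i ∈ Finset.range d, ((i : ℝ) + 1) := by
  induction d with
  | zero => simp
  | succ d ih => rw [Finset.prod_range_succ, ← ih, Nat.factorial_succ]; push_cast; ring

lemma poch_lower {γ : ℝ} (hγ : ∀ n : ℕ, γ ≠ -(n : ℝ)) :
    ∃ (c : ℝ) (G : ℕ), 0 < c ∧
      ∀ m : ℕ, c * m.factorial ≤ ((m : ℝ) + 1) ^ G * |poch γ m| := by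
  set G : ℕ := ⌈|γ|⌉₊ + 1 with hG
  have hγG : |γ| ≤ (G : ℝ) - 1 := by
    have := Nat.le_ceil |γ|
    have : (⌈|γ|⌉₊ : ℝ) = (G : ℝ) - 1 := by push_cast [hG]; ring
    linarith [Nat.le_ceil |γ|]
  have hposf : ∀ m : ℕ, 0 < ((m : ℝ) + 1) ^ G * |poch γ m| / m.factorial := by
    intro m
    have h1 : (0:ℝ) < ((m : ℝ) + 1) ^ G := by positivity
    have h2 : (0:ℝ) < |poch γ m| := abs_pos.mpr (poch_ne_zero hγ m)
    have h3 : (0:ℝ) < m.factorial := by exact_mod_cast m.factorial_pos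
    positivity
  obtain ⟨c2, hc2, hc2le⟩ := aux_min_pos _ hposf G
  have hPG : (0:ℝ) < |poch γ G| := abs_pos.mpr (poch_ne_zero hγ G)
  refine ⟨min c2 (min |poch γ G| 1), G, by positivity, fun m => ?_⟩
  rcases lt_or_ge m G with hm | hm
  · have h := hc2le m hm
    have h3 : (0:ℝ) < m.factorial := by exact_mod_cast m.factorial_pos
    rw [le_div_iff₀ h3] at h
    calc min c2 (min |poch γ G| 1) * m.factorial ≤ c2 * m.factorial := by
          have : (0:ℝ) ≤ (m.factorial : ℝ) := le_of_lt h3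
          exact mul_le_mul_of_nonneg_right (min_le_left _ _) this
      _ ≤ ((m : ℝ) + 1) ^ G * |poch γ m| := h
  · obtain ⟨d, rfl⟩ := Nat.exists_eq_add_of_le hm
    -- split the product
    have hsplit : poch γ (G + d) = poch γ G * ∏ i ∈ Finset.range d, (γ + (G + i : ℕ)) := by
      rw [poch, poch, Finset.prod_range_add]
    have htail2 : ((d.factorial : ℝ)) ≤ |∏ i ∈ Finset.range d, (γ + (G + i : ℕ))| := by
      rw [Finset.abs_prod]
      rw [aux_cast_factorial d]
      refine Finset.prod_le_prod (fun i _ => by positivity) (fun i _ => ?_)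
      have hge : (i : ℝ) + 1 ≤ γ + (G + i : ℕ) := by
        have hγlb : -|γ| ≤ γ := neg_abs_le γ
        have hce : |γ| ≤ (⌈|γ|⌉₊ : ℝ) := Nat.le_ceil _
        push_cast
        linarith
      exact hge.trans (le_abs_self _)
    have hfact : ((G + d).factorial : ℝ) ≤ (d.factorial : ℝ) * ((G + d : ℝ) + 1) ^ G := by
      have := aux_fact_le G d
      calc ((G + d).factorial : ℝ) ≤ ((d.factorial * (G + d + 1) ^ G : ℕ) : ℝ) := by
            exact_mod_cast this
        _ = (d.factorial : ℝ) * ((G + d : ℝ) + 1) ^ G := by push_cast; ring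
    have habs : |poch γ (G + d)| = |poch γ G| * |∏ i ∈ Finset.range d, (γ + (G + i : ℕ))| := by
      rw [hsplit, abs_mul]
    calc min c2 (min |poch γ G| 1) * (G + d).factorial
        ≤ |poch γ G| * (G + d).factorial := by
          have h3 : (0:ℝ) ≤ ((G + d).factorial : ℝ) := by positivity
          refine mul_le_mul_of_nonneg_right ?_ h3
          exact (min_le_right _ _).trans (min_le_left _ _)
      _ ≤ |poch γ G| * ((d.factorial : ℝ) * ((G + d : ℝ) + 1) ^ G) := by
          exact mul_le_mul_of_nonneg_left hfact (abs_nonneg _)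
      _ ≤ |poch γ G| * (|∏ i ∈ Finset.range d, (γ + (G + i : ℕ))| * ((G + d : ℝ) + 1) ^ G) := by
          refine mul_le_mul_of_nonneg_left ?_ (abs_nonneg _)
          exact mul_le_mul_of_nonneg_right htail2 (by positivity)
      _ = (((G + d : ℕ) : ℝ) + 1) ^ G * |poch γ (G + d)| := by
          rw [habs]; push_cast; ring

/-- binomial bound: choose(m+n, m) · s^m · t^n ≤ (s+t)^(m+n) for s,t ≥ 0 -/
lemma aux_choose_bound {s t : ℝ} (hs : 0 ≤ s) (ht : 0 ≤ t) (m n : ℕ) :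
    (((m + n).choose m : ℕ) : ℝ) * s ^ m * t ^ n ≤ (s + t) ^ (m + n) := by
  rw [add_pow]
  have hmem : m ∈ Finset.range (m + n + 1) := Finset.mem_range.mpr (by omega)
  have := Finset.single_le_sum
    (f := fun k => s ^ k * t ^ (m + n - k) * ((m + n).choose k : ℝ))
    (fun i _ => by positivity) hmem
  calc (((m + n).choose m : ℕ) : ℝ) * s ^ m * t ^ n
      = s ^ m * t ^ (m + n - m) * ((m + n).choose m : ℝ) := by
        rw [show m + n - m = n by omega]; ring
    _ ≤ _ := this

set_option maxHeartbeats 2000000 in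
/-- Absolute convergence of the double series defining the fourth Appell function
`F₄(α,β;γ,γ';u,v) = Σ_{m,n≥0} (α)_{m+n}(β)_{m+n} u^m v^n / ((γ)_m (γ')_n m! n!)`
in the domain `√|u| + √|v| < 1`. -/
theorem appell_F4_absolutely_summable
    (α β γ γ' : ℝ)
    (hγ : ∀ n : ℕ, γ ≠ -(n : ℝ))
    (hγ' : ∀ n : ℕ, γ' ≠ -(n : ℝ)) :
    ∀ u v : ℝ, Real.sqrt |u| + Real.sqrt |v| < 1 →
      Summable (fun p : ℕ × ℕ =>
        |poch α (p.1 + p.2) * poch β (p.1 + p.2) * u ^ p.1 * v ^ p.2 /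
          (poch γ p.1 * poch γ' p.2 * p.1.factorial * p.2.factorial)|) := by
  intro u v huv
  set s := Real.sqrt |u| with hs_def
  set t := Real.sqrt |v| with ht_def
  have hs : 0 ≤ s := Real.sqrt_nonneg _
  have ht : 0 ≤ t := Real.sqrt_nonneg _
  have hu : |u| = s ^ 2 := (Real.sq_sqrt (abs_nonneg u)).symm
  have hv : |v| = t ^ 2 := (Real.sq_sqrt (abs_nonneg v)).symm
  set ρ : ℝ := s + t with hρ_def
  have hρ0 : 0 ≤ ρ := by positivity
  have hρ1 : ρ < 1 := huv
  set ρ' : ℝ := (1 + ρ ^ 2) / 2 with hρ'_def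
  have hρ'0 : 0 < ρ' := by positivity
  have hρ'1 : ρ' < 1 := by nlinarith
  set σ : ℝ := ρ ^ 2 / ρ' with hσ_def
  have hσ0 : 0 ≤ σ := by positivity
  have hσ1 : σ < 1 := by
    rw [hσ_def, div_lt_one hρ'0]; nlinarith
  have hfacρ : ρ ^ 2 = ρ' * σ := by rw [hσ_def]; field_simp
  obtain ⟨Kα, hKα⟩ := poch_upper α
  obtain ⟨Kβ, hKβ⟩ := poch_upper β
  obtain ⟨cγ, Gγ, hcγ, hγlow⟩ := poch_lower hγ
  obtain ⟨cγ', Gγ', hcγ', hγ'low⟩ := poch_lower hγ'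
  set K : ℕ := Kα + Kβ + Gγ + Gγ' with hK_def
  -- bound (N+1)^K σ^N ≤ D
  have hsum := summable_pow_mul_geometric_of_norm_lt_one (R := ℝ) K
    (by rwa [Real.norm_eq_abs, abs_of_nonneg hσ0])
  have htend : Filter.Tendsto (fun n : ℕ => (n : ℝ) ^ K * σ ^ n) Filter.atTop (nhds 0) :=
    hsum.tendsto_atTop_zero
  obtain ⟨M, hM⟩ := htend.bddAbove_range
  have hMle : ∀ N : ℕ, (N : ℝ) ^ K * σ ^ N ≤ M := fun N => hM (Set.mem_range_self N)
  have hM0 : 0 ≤ M := by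
    refine le_trans ?_ (hMle 1)
    positivity
  set D : ℝ := 2 ^ K * M + 1 with hD_def
  have hD0 : 0 < D := by positivity
  have hD : ∀ N : ℕ, ((N : ℝ) + 1) ^ K * σ ^ N ≤ D := by
    intro N
    cases N with
    | zero =>
      have h1 : (0:ℝ) ≤ 2 ^ K * M := by positivity
      rw [hD_def]
      norm_num
      linarith
    | succ n =>
      have h1 : ((n : ℝ) + 1 + 1) ^ K ≤ (2 * ((n : ℝ) + 1)) ^ K := by
        refine pow_le_pow_left₀ (by positivity) (by push_cast; linarith) K
      have h2 : (0:ℝ) ≤ σ ^ (n + 1) := by positivity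
      calc ((↑(n + 1) : ℝ) + 1) ^ K * σ ^ (n + 1)
          ≤ (2 * ((n : ℝ) + 1)) ^ K * σ ^ (n + 1) := by
            push_cast
            exact mul_le_mul_of_nonneg_right h1 h2
        _ = 2 ^ K * ((↑(n + 1) : ℝ) ^ K * σ ^ (n + 1)) := by
            rw [mul_pow]; push_cast; ring
        _ ≤ 2 ^ K * M := by
            exact mul_le_mul_of_nonneg_left (hMle (n + 1)) (by positivity)
        _ ≤ D := by rw [hD_def]; linarith
  -- majorant
  have hCpos : (0:ℝ) < (cγ * cγ')⁻¹ := by positivity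
  have hmaj : Summable (fun p : ℕ × ℕ => ((cγ * cγ')⁻¹ * D * ρ' ^ p.1) * ρ' ^ p.2) := by
    have h1 : Summable (fun m : ℕ => (cγ * cγ')⁻¹ * D * ρ' ^ m) :=
      (summable_geometric_of_lt_one (le_of_lt hρ'0) hρ'1).mul_left _
    have h2 : Summable (fun n : ℕ => ρ' ^ n) :=
      summable_geometric_of_lt_one (le_of_lt hρ'0) hρ'1
    exact h1.mul_of_nonneg h2 (fun m => by positivity) (fun n => by positivity)
  refine Summable.of_nonneg_of_le (fun p => abs_nonneg _) (fun p => ?_) hmaj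
  obtain ⟨m, n⟩ := p
  simp only
  set N : ℕ := m + n with hN_def
  have hPpos : (0:ℝ) < |poch γ m| := abs_pos.mpr (poch_ne_zero hγ m)
  have hQpos : (0:ℝ) < |poch γ' n| := abs_pos.mpr (poch_ne_zero hγ' n)
  have hFpos : (0:ℝ) < (m.factorial : ℝ) := by exact_mod_cast m.factorial_pos
  have hEpos : (0:ℝ) < (n.factorial : ℝ) := by exact_mod_cast n.factorial_pos
  have hden : (0:ℝ) < |poch γ m| * |poch γ' n| * m.factorial * n.factorial := by
    positivity
  have habs_num : |poch α N * poch β N * u ^ m * v ^ n|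
      = |poch α N| * |poch β N| * (s ^ m) ^ 2 * (t ^ n) ^ 2 := by
    rw [abs_mul, abs_mul, abs_mul, abs_pow, abs_pow, hu, hv,
      ← pow_mul, ← pow_mul, ← pow_mul, ← pow_mul, Nat.mul_comm 2 m, Nat.mul_comm 2 n]
  have habs_den : |poch γ m * poch γ' n * (m.factorial : ℝ) * (n.factorial : ℝ)|
      = |poch γ m| * |poch γ' n| * m.factorial * n.factorial := by
    rw [abs_mul, abs_mul, abs_mul, Nat.abs_cast, Nat.abs_cast]
  rw [abs_div, habs_num, habs_den, div_le_iff₀ hden]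
  -- key facts
  have hA := hKα N
  have hB := hKβ N
  have hmN : ((m : ℝ) + 1) ^ Gγ ≤ ((N : ℝ) + 1) ^ Gγ := by
    refine pow_le_pow_left₀ (by positivity) ?_ _
    have : (m : ℝ) ≤ (N : ℝ) := by exact_mod_cast Nat.le_add_right m n
    linarith
  have hnN : ((n : ℝ) + 1) ^ Gγ' ≤ ((N : ℝ) + 1) ^ Gγ' := by
    refine pow_le_pow_left₀ (by positivity) ?_ _
    have : (n : ℝ) ≤ (N : ℝ) := by exact_mod_cast Nat.le_add_left n m
    linarith
  have hF : (m.factorial : ℝ) ≤ ((N : ℝ) + 1) ^ Gγ * |poch γ m| / cγ := by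
    rw [le_div_iff₀ hcγ]
    calc (m.factorial : ℝ) * cγ = cγ * m.factorial := by ring
      _ ≤ ((m : ℝ) + 1) ^ Gγ * |poch γ m| := hγlow m
      _ ≤ ((N : ℝ) + 1) ^ Gγ * |poch γ m| :=
          mul_le_mul_of_nonneg_right hmN (abs_nonneg _)
  have hE : (n.factorial : ℝ) ≤ ((N : ℝ) + 1) ^ Gγ' * |poch γ' n| / cγ' := by
    rw [le_div_iff₀ hcγ']
    calc (n.factorial : ℝ) * cγ' = cγ' * n.factorial := by ring
      _ ≤ ((n : ℝ) + 1) ^ Gγ' * |poch γ' n| := hγ'low n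
      _ ≤ ((N : ℝ) + 1) ^ Gγ' * |poch γ' n| :=
          mul_le_mul_of_nonneg_right hnN (abs_nonneg _)
  have hchooseNat : (N.choose m) * m.factorial * n.factorial = N.factorial := by
    have h := Nat.add_choose_mul_factorial_mul_factorial n m
    rw [Nat.add_comm n m] at h
    rw [hN_def]
    rw [Nat.mul_right_comm] at h
    exact h
  have hchoose : ((N.choose m : ℕ) : ℝ) * m.factorial * n.factorial = (N.factorial : ℝ) := by
    exact_mod_cast congrArg (Nat.cast : ℕ → ℝ) hchooseNat
  have hbin : ((N.choose m : ℕ) : ℝ) * s ^ m * t ^ n ≤ ρ ^ N :=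
    aux_choose_bound hs ht m n
  have hbin0 : (0:ℝ) ≤ ((N.choose m : ℕ) : ℝ) * s ^ m * t ^ n := by positivity
  have hpowK : ((N : ℝ) + 1) ^ K
      = ((N : ℝ) + 1) ^ Kα * ((N : ℝ) + 1) ^ Kβ * ((N : ℝ) + 1) ^ Gγ * ((N : ℝ) + 1) ^ Gγ' := by
    rw [hK_def, pow_add, pow_add, pow_add]
  have hρ'N : ρ' ^ N = ρ' ^ m * ρ' ^ n := by rw [hN_def, pow_add]
  calc |poch α N| * |poch β N| * (s ^ m) ^ 2 * (t ^ n) ^ 2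
      ≤ (((N : ℝ) + 1) ^ Kα * N.factorial) * (((N : ℝ) + 1) ^ Kβ * N.factorial)
          * (s ^ m) ^ 2 * (t ^ n) ^ 2 := by
        gcongr <;> positivity
    _ = ((N : ℝ) + 1) ^ Kα * ((N : ℝ) + 1) ^ Kβ
          * (((N.choose m : ℕ) : ℝ) * s ^ m * t ^ n) ^ 2
          * ((m.factorial : ℝ) * n.factorial)
          * ((m.factorial : ℝ) * n.factorial) := by
        rw [← hchoose]; ring
    _ ≤ ((N : ℝ) + 1) ^ Kα * ((N : ℝ) + 1) ^ Kβ * (ρ ^ N) ^ 2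
          * ((m.factorial : ℝ) * n.factorial)
          * ((((N : ℝ) + 1) ^ Gγ * |poch γ m| / cγ)
              * (((N : ℝ) + 1) ^ Gγ' * |poch γ' n| / cγ')) := by
        gcongr
    _ = (((N : ℝ) + 1) ^ K * σ ^ N)
          * ((cγ * cγ')⁻¹ * ρ' ^ N
              * (|poch γ m| * |poch γ' n| * m.factorial * n.factorial)) := by
        rw [hpowK, ← pow_mul, Nat.mul_comm N 2, pow_mul, hfacρ, mul_pow]
        field_simp
    _ ≤ D * ((cγ * cγ')⁻¹ * ρ' ^ N
              * (|poch γ m| * |poch γ' n| * m.factorial * n.factorial)) := by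
        have h := hD N
        have hnn : (0:ℝ) ≤ (cγ * cγ')⁻¹ * ρ' ^ N
            * (|poch γ m| * |poch γ' n| * m.factorial * n.factorial) := by positivity
        exact mul_le_mul_of_nonneg_right h hnn
    _ = (cγ * cγ')⁻¹ * D * ρ' ^ m * ρ' ^ n
          * (|poch γ m| * |poch γ' n| * m.factorial * n.factorial) := by
        rw [hρ'N]; ring
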